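/- The Green's tensor Γ̂₀(ξ) admits the orthogonal decomposition Γ̂₀(ξ) = Γ₀^iso + Γ̂₀^⊥(ξ) where Γ₀^iso = λ_J J + (λ_K/n_K) K with λ_J = (1/d)(4α₀+β₀), λ_K = (1/d)[(2d(d+1)−4)α₀ + (d−1)β₀], n_K = d(d+1)/2 − 1, is independent of ξ, and Γ̂₀^⊥(ξ) :: J = Γ̂₀^⊥(ξ) :: K = 0 for all ξ ≠ 0. -/

import Mathlib

open scoped BigOperators

/-- Fourth-order tensors on ℝ^d. -/
abbrev Tensor4 (d : ℕ) := Fin d → Fin d → Fin d → Fin d → ℝ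

/-- The symmetric identity tensor (Isym)_{ijkl} = (δ_{ik}δ_{jl} + δ_{il}δ_{jk})/2. -/
noncomputable def Isym (d : ℕ) : Tensor4 d :=
  fun i j k l =>
    ((if i = k then (1:ℝ) else 0) * (if j = l then 1 else 0) +
     (if i = l then (1:ℝ) else 0) * (if j = k then 1 else 0)) / 2

/-- The spherical projector J = (1/d) I ⊗ I. -/
noncomputable def Jt (d : ℕ) : Tensor4 d :=
  fun i j k l => (if i = j then (1:ℝ) else 0) * (if k = l then 1 else 0) / d

/-- The deviatoric projector K = Isym − J. -/
noncomputable def Kt (d : ℕ) : Tensor4 d :=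
  fun i j k l => Isym d i j k l - Jt d i j k l

/-- Full double contraction A :: B = A_{ijkl} B_{ijkl}. -/
def fullContr {d : ℕ} (A B : Tensor4 d) : ℝ :=
  ∑ i, ∑ j, ∑ k, ∑ l, A i j k l * B i j k l

/-- Action of a fourth-order tensor on a second-order tensor: (A : τ)_{ij} = A_{ijkl} τ_{kl}. -/
def act {d : ℕ} (A : Tensor4 d) (τ : Fin d → Fin d → ℝ) : Fin d → Fin d → ℝ :=
  fun i j => ∑ k, ∑ l, A i j k l * τ k l

/-- Frobenius inner product of second-order tensors. -/
def inn {d : ℕ} (σ τ : Fin d → Fin d → ℝ) : ℝ := ∑ i, ∑ j, σ i j * τ i j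

/-- Trace of a second-order tensor. -/
def trace2 {d : ℕ} (τ : Fin d → Fin d → ℝ) : ℝ := ∑ i, τ i i

/-- Deviatoric part of a second-order tensor. -/
noncomputable def dev {d : ℕ} (τ : Fin d → Fin d → ℝ) : Fin d → Fin d → ℝ :=
  fun i j => τ i j - trace2 τ / d * (if i = j then 1 else 0)

/-- Tensor product of two second-order tensors: (σ ⊗ τ)_{ijkl} = σ_{ij} τ_{kl}. -/
def tens {d : ℕ} (σ τ : Fin d → Fin d → ℝ) : Tensor4 d :=
  fun i j k l => σ i j * τ k l

/-- ψ(ξ) = ξ ⊗ ξ. -/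
def psi {d : ℕ} (ξ : Fin d → ℝ) : Fin d → Fin d → ℝ := fun i j => ξ i * ξ j

/-- ψ_c(ξ) = ξ ⊗ e_c + e_c ⊗ ξ. -/
noncomputable def psiB {d : ℕ} (ξ : Fin d → ℝ) (c : Fin d) : Fin d → Fin d → ℝ :=
  fun i j => ξ i * (if j = c then 1 else 0) + (if i = c then 1 else 0) * ξ j

/-- |ξ|². -/
def nsq {d : ℕ} (ξ : Fin d → ℝ) : ℝ := ∑ i, ξ i ^ 2

/-- The Green's tensor Γ̂₀(ξ). -/
noncomputable def Green {d : ℕ} (α β : ℝ) (ξ : Fin d → ℝ) : Tensor4 d :=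
  fun i j k l =>
    α / nsq ξ * ∑ c, psiB ξ c i j * psiB ξ c k l +
    β / (nsq ξ) ^ 2 * (psi ξ i j * psi ξ k l)


/- ## Auxiliary lemmas -/

lemma contr_J {d : ℕ} (A : Tensor4 d) :
    fullContr A (Jt d) = (∑ i, ∑ k, A i i k k) / d := by
  unfold fullContr Jt
  have h1 : ∀ i j k : Fin d, ∑ l, A i j k l * ((if i = j then (1:ℝ) else 0) * (if k = l then 1 else 0) / d)
      = (A i j k k * (if i = j then (1:ℝ) else 0)) / d := by
    intro i j k
    have : ∀ l, A i j k l * ((if i = j then (1:ℝ) else 0) * (if k = l then 1 else 0) / d)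
        = (A i j k l * (if i = j then (1:ℝ) else 0) / d) * (if k = l then (1:ℝ) else 0) := by
      intro l; ring
    simp_rw [this]
    simp
  simp_rw [h1]
  have h2 : ∀ i : Fin d, ∑ j, ∑ k, A i j k k * (if i = j then (1:ℝ) else 0) / d
      = ∑ k, A i i k k / d := by
    intro i
    rw [Finset.sum_comm]
    have : ∀ k : Fin d, ∑ j, A i j k k * (if i = j then (1:ℝ) else 0) / d
        = A i i k k / d := by
      intro k
      have : ∀ j, A i j k k * (if i = j then (1:ℝ) else 0) / d
          = (A i j k k / d) * (if i = j then (1:ℝ) else 0) := fun j => by ring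
      simp_rw [this]
      simp
    simp_rw [this]
  simp_rw [h2, Finset.sum_div]

lemma contr_I {d : ℕ} (A : Tensor4 d) :
    fullContr A (Isym d) = (∑ i, ∑ j, (A i j i j + A i j j i)) / 2 := by
  unfold fullContr Isym
  have h1 : ∀ i j k : Fin d, ∑ l, A i j k l *
      (((if i = k then (1:ℝ) else 0) * (if j = l then 1 else 0) +
        (if i = l then (1:ℝ) else 0) * (if j = k then 1 else 0)) / 2)
      = (A i j k j * (if i = k then (1:ℝ) else 0)) / 2
        + (A i j k i * (if j = k then (1:ℝ) else 0)) / 2 := by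
    intro i j k
    have : ∀ l, A i j k l *
        (((if i = k then (1:ℝ) else 0) * (if j = l then 1 else 0) +
          (if i = l then (1:ℝ) else 0) * (if j = k then 1 else 0)) / 2)
        = (A i j k l * (if i = k then (1:ℝ) else 0) / 2) * (if j = l then (1:ℝ) else 0)
          + (A i j k l * (if j = k then (1:ℝ) else 0) / 2) * (if i = l then (1:ℝ) else 0) := by
      intro l; ring
    simp_rw [this, Finset.sum_add_distrib]
    simp
  simp_rw [h1, Finset.sum_add_distrib]
  have h2 : ∀ i j : Fin d, ∑ k, A i j k j * (if i = k then (1:ℝ) else 0) / 2 = A i j i j / 2 := by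
    intro i j
    have : ∀ k, A i j k j * (if i = k then (1:ℝ) else 0) / 2
        = (A i j k j / 2) * (if i = k then (1:ℝ) else 0) := fun k => by ring
    simp_rw [this]; simp
  have h3 : ∀ i j : Fin d, ∑ k, A i j k i * (if j = k then (1:ℝ) else 0) / 2 = A i j j i / 2 := by
    intro i j
    have : ∀ k, A i j k i * (if j = k then (1:ℝ) else 0) / 2
        = (A i j k i / 2) * (if j = k then (1:ℝ) else 0) := fun k => by ring
    simp_rw [this]; simp
  simp_rw [h2, h3]
  simp [Finset.sum_add_distrib, Finset.sum_div, add_div]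

lemma fullContr_sub {d : ℕ} (A B C : Tensor4 d) :
    fullContr (fun i j k l => A i j k l - B i j k l) C = fullContr A C - fullContr B C := by
  simp [fullContr, sub_mul, Finset.sum_sub_distrib]

lemma fullContr_add {d : ℕ} (A B C : Tensor4 d) :
    fullContr (fun i j k l => A i j k l + B i j k l) C = fullContr A C + fullContr B C := by
  simp [fullContr, add_mul, Finset.sum_add_distrib]

lemma fullContr_smul {d : ℕ} (c : ℝ) (A B : Tensor4 d) :
    fullContr (fun i j k l => c * A i j k l) B = c * fullContr A B := by
  simp [fullContr, mul_assoc, Finset.mul_sum]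

lemma fullContr_sub' {d : ℕ} (A B C : Tensor4 d) :
    fullContr A (fun i j k l => B i j k l - C i j k l) = fullContr A B - fullContr A C := by
  simp [fullContr, mul_sub, Finset.sum_sub_distrib]

lemma fullContr_sum {d : ℕ} (T : Fin d → Tensor4 d) (B : Tensor4 d) :
    fullContr (fun i j k l => ∑ c, T c i j k l) B = ∑ c, fullContr (T c) B := by
  simp only [fullContr, Finset.sum_mul]
  have h4 : ∀ i j k : Fin d, ∑ l, ∑ c, T c i j k l * B i j k l
      = ∑ c, ∑ l, T c i j k l * B i j k l := fun _ _ _ => Finset.sum_comm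
  simp_rw [h4]
  have h3 : ∀ i j : Fin d, ∑ k, ∑ c, ∑ l, T c i j k l * B i j k l
      = ∑ c, ∑ k, ∑ l, T c i j k l * B i j k l := fun _ _ => Finset.sum_comm
  simp_rw [h3]
  have h2 : ∀ i : Fin d, ∑ j, ∑ c, ∑ k, ∑ l, T c i j k l * B i j k l
      = ∑ c, ∑ j, ∑ k, ∑ l, T c i j k l * B i j k l := fun _ => Finset.sum_comm
  simp_rw [h2]
  exact Finset.sum_comm

lemma contr_tens_J {d : ℕ} (σ τ : Fin d → Fin d → ℝ) :
    fullContr (tens σ τ) (Jt d) = (∑ i, σ i i) * (∑ k, τ k k) / d := by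
  rw [contr_J, Finset.sum_mul_sum]
  rfl

lemma contr_tens_I {d : ℕ} (σ τ : Fin d → Fin d → ℝ) :
    fullContr (tens σ τ) (Isym d) = (∑ i, ∑ j, (σ i j * τ i j + σ i j * τ j i)) / 2 := by
  rw [contr_I]
  rfl

lemma trace_psi {d : ℕ} (ξ : Fin d → ℝ) : ∑ i, psi ξ i i = nsq ξ := by
  simp [psi, nsq, sq]

lemma trace_psiB {d : ℕ} (ξ : Fin d → ℝ) (c : Fin d) : ∑ i, psiB ξ c i i = 2 * ξ c := by
  simp [psiB, Finset.sum_add_distrib, mul_ite, ite_mul]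
  ring

lemma psi_symm {d : ℕ} (ξ : Fin d → ℝ) (i j : Fin d) : psi ξ j i = psi ξ i j := by
  simp [psi]; ring

lemma psiB_symm {d : ℕ} (ξ : Fin d → ℝ) (c i j : Fin d) : psiB ξ c j i = psiB ξ c i j := by
  simp [psiB]; ring

lemma inn_psi {d : ℕ} (ξ : Fin d → ℝ) : ∑ i, ∑ j, psi ξ i j * psi ξ i j = nsq ξ ^ 2 := by
  have : ∀ i j : Fin d, psi ξ i j * psi ξ i j = ξ i ^ 2 * ξ j ^ 2 := by
    intro i j; simp [psi]; ring
  simp_rw [this, ← Finset.mul_sum, ← Finset.sum_mul, nsq, sq]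

lemma inn_psiB {d : ℕ} (ξ : Fin d → ℝ) (c : Fin d) :
    ∑ i, ∑ j, psiB ξ c i j * psiB ξ c i j = 2 * nsq ξ + 2 * ξ c ^ 2 := by
  have key : ∀ i j : Fin d, psiB ξ c i j * psiB ξ c i j
      = ξ i ^ 2 * (if j = c then (1:ℝ) else 0)
        + (2 * ξ i * ξ j * (if j = c then (1:ℝ) else 0)) * (if i = c then (1:ℝ) else 0)
        + (if i = c then (1:ℝ) else 0) * ξ j ^ 2 := by
    intro i j
    by_cases h1 : i = c <;> by_cases h2 : j = c <;> simp [psiB, h1, h2] <;> ring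
  simp_rw [key, Finset.sum_add_distrib]
  have e1 : ∑ i : Fin d, ∑ j, ξ i ^ 2 * (if j = c then (1:ℝ) else 0) = nsq ξ := by
    simp [nsq]
  have e2 : ∑ i : Fin d, ∑ j, (2 * ξ i * ξ j * (if j = c then (1:ℝ) else 0)) * (if i = c then (1:ℝ) else 0) = 2 * ξ c ^ 2 := by
    have h : ∀ i : Fin d, ∑ j, (2 * ξ i * ξ j * (if j = c then (1:ℝ) else 0)) * (if i = c then (1:ℝ) else 0)
        = (2 * ξ i * ξ c) * (if i = c then (1:ℝ) else 0) := by
      intro i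
      have : ∀ j, (2 * ξ i * ξ j * (if j = c then (1:ℝ) else 0)) * (if i = c then (1:ℝ) else 0)
          = ((2 * ξ i * (if i = c then (1:ℝ) else 0)) * ξ j) * (if j = c then (1:ℝ) else 0) := fun j => by ring
      simp_rw [this]
      simp
    simp_rw [h]
    simp [sq]; ring
  have e3 : ∑ i : Fin d, ∑ j, (if i = c then (1:ℝ) else 0) * ξ j ^ 2 = nsq ξ := by
    have : ∀ i : Fin d, ∑ j, (if i = c then (1:ℝ) else 0) * ξ j ^ 2
        = (if i = c then (1:ℝ) else 0) * nsq ξ := by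
      intro i; rw [← Finset.mul_sum]; rfl
    simp_rw [this]
    simp
  rw [e1, e2, e3]; ring

lemma green_contr {d : ℕ} (α β : ℝ) (ξ : Fin d → ℝ) (B : Tensor4 d) :
    fullContr (Green α β ξ) B
      = (α / nsq ξ) * ∑ c, fullContr (tens (psiB ξ c) (psiB ξ c)) B
        + (β / (nsq ξ) ^ 2) * fullContr (tens (psi ξ) (psi ξ)) B := by
  have e1 : fullContr (Green α β ξ) B
      = fullContr (fun i j k l => (α / nsq ξ) * ∑ c, tens (psiB ξ c) (psiB ξ c) i j k l) B
        + fullContr (fun i j k l => (β / (nsq ξ) ^ 2) * tens (psi ξ) (psi ξ) i j k l) B :=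
    fullContr_add _ _ _
  rw [e1, fullContr_smul, fullContr_smul,
    fullContr_sum (fun c => tens (psiB ξ c) (psiB ξ c)) B]

lemma JJ {d : ℕ} (hd : (d:ℝ) ≠ 0) : fullContr (Jt d) (Jt d) = 1 := by
  rw [contr_J]
  simp [Jt, Finset.card_univ]
  field_simp

lemma IJ {d : ℕ} (hd : (d:ℝ) ≠ 0) : fullContr (Isym d) (Jt d) = 1 := by
  rw [contr_J]
  have h : ∀ i k : Fin d, Isym d i i k k = if i = k then (1:ℝ) else 0 := by
    intro i k
    by_cases h : i = k
    · simp [Isym, h]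
    · simp [Isym, h, Ne.symm h]
  simp_rw [h]
  simp [Finset.card_univ]
  exact_mod_cast hd

lemma JI {d : ℕ} (hd : (d:ℝ) ≠ 0) : fullContr (Jt d) (Isym d) = 1 := by
  rw [contr_I]
  have h : ∀ i j : Fin d, Jt d i j i j + Jt d i j j i = 2 * (if i = j then (1:ℝ) else 0) / d := by
    intro i j
    by_cases h : i = j
    · simp [Jt, h]; ring
    · simp [Jt, h, Ne.symm h]
  simp_rw [h]
  simp [Finset.card_univ, ite_div, zero_div, Finset.sum_ite_eq]
  field_simp

lemma II {d : ℕ} : fullContr (Isym d) (Isym d) = (d:ℝ) * ((d:ℝ) + 1) / 2 := by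
  rw [contr_I]
  have h : ∀ i j : Fin d, Isym d i j i j + Isym d i j j i = 1 + (if i = j then (1:ℝ) else 0) := by
    intro i j
    by_cases h : i = j
    · simp [Isym, h]
    · simp [Isym, h, Ne.symm h]; norm_num
  simp_rw [h]
  simp [Finset.sum_add_distrib, Finset.card_univ]
  ring

theorem green_orthogonal_decomposition (d : ℕ) (hd : 2 ≤ d) (α β : ℝ) :
    ∀ ξ : Fin d → ℝ, ξ ≠ 0 →
    let lamJ : ℝ := (1 / (d : ℝ)) * (4 * α + β)
    let lamK : ℝ := (1 / (d : ℝ)) * ((2 * (d : ℝ) * ((d : ℝ) + 1) - 4) * α + ((d : ℝ) - 1) * β)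
    let nK : ℝ := (d : ℝ) * ((d : ℝ) + 1) / 2 - 1
    let Giso : Tensor4 d := fun i j k l => lamJ * Jt d i j k l + (lamK / nK) * Kt d i j k l
    let Gperp : Tensor4 d := fun i j k l => Green α β ξ i j k l - Giso i j k l
    (Green α β ξ = fun i j k l => Giso i j k l + Gperp i j k l) ∧
    fullContr Gperp (Jt d) = 0 ∧ fullContr Gperp (Kt d) = 0 := by
  intro ξ hξ
  intro lamJ lamK nK Giso Gperp
  have hd2 : (2:ℝ) ≤ (d:ℝ) := by exact_mod_cast hd
  have hd0 : (d:ℝ) ≠ 0 := by linarith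
  have hnK : nK ≠ 0 := by
    have : (2:ℝ) ≤ nK := by show (2:ℝ) ≤ (d:ℝ) * ((d:ℝ) + 1) / 2 - 1; nlinarith
    linarith
  have hn : nsq ξ ≠ 0 := by
    have hex : ∃ i, ξ i ≠ 0 := by
      by_contra h
      push_neg at h
      exact hξ (funext h)
    obtain ⟨i, hi⟩ := hex
    have h1 : 0 < ξ i ^ 2 := by positivity
    have h2 : ξ i ^ 2 ≤ nsq ξ :=
      Finset.single_le_sum (f := fun j => ξ j ^ 2) (fun j _ => by positivity) (Finset.mem_univ i)
    nlinarith
  -- contractions of Green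
  have GJ : fullContr (Green α β ξ) (Jt d) = (4 * α + β) / d := by
    rw [green_contr]
    have h1 : ∀ c : Fin d, fullContr (tens (psiB ξ c) (psiB ξ c)) (Jt d) = 4 * ξ c ^ 2 / d := by
      intro c
      rw [contr_tens_J, trace_psiB]
      ring
    simp_rw [h1]
    rw [contr_tens_J, trace_psi]
    have hs : ∑ c : Fin d, 4 * ξ c ^ 2 / (d:ℝ) = 4 * nsq ξ / d := by
      rw [nsq, Finset.mul_sum, Finset.sum_div]
    rw [hs]
    field_simp
  have GI : fullContr (Green α β ξ) (Isym d) = 2 * ((d:ℝ) + 1) * α + β := by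
    rw [green_contr]
    have h1 : ∀ c : Fin d, fullContr (tens (psiB ξ c) (psiB ξ c)) (Isym d)
        = 2 * nsq ξ + 2 * ξ c ^ 2 := by
      intro c
      rw [contr_tens_I]
      have : ∀ i j : Fin d, psiB ξ c i j * psiB ξ c i j + psiB ξ c i j * psiB ξ c j i
          = 2 * (psiB ξ c i j * psiB ξ c i j) := by
        intro i j; rw [psiB_symm]; ring
      simp_rw [this, ← Finset.mul_sum]
      rw [inn_psiB]
      ring
    simp_rw [h1]
    have h2 : fullContr (tens (psi ξ) (psi ξ)) (Isym d) = nsq ξ ^ 2 := by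
      rw [contr_tens_I]
      have : ∀ i j : Fin d, psi ξ i j * psi ξ i j + psi ξ i j * psi ξ j i
          = 2 * (psi ξ i j * psi ξ i j) := by
        intro i j; rw [psi_symm]; ring
      simp_rw [this, ← Finset.mul_sum]
      rw [inn_psi]
      ring
    rw [h2]
    have hs : ∑ c : Fin d, (2 * nsq ξ + 2 * ξ c ^ 2) = 2 * (d:ℝ) * nsq ξ + 2 * nsq ξ := by
      rw [Finset.sum_add_distrib, Finset.sum_const, Finset.card_univ, Fintype.card_fin,
        ← Finset.mul_sum, nsmul_eq_mul]
      show (d:ℝ) * (2 * nsq ξ) + 2 * nsq ξ = _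
      ring
    rw [hs]
    field_simp
  -- contractions of K with J and I
  have KJ : fullContr (Kt d) (Jt d) = 0 := by
    have e : fullContr (Kt d) (Jt d)
        = fullContr (Isym d) (Jt d) - fullContr (Jt d) (Jt d) := fullContr_sub _ _ _
    rw [e, IJ hd0, JJ hd0]
    ring
  have KI : fullContr (Kt d) (Isym d) = (d:ℝ) * ((d:ℝ) + 1) / 2 - 1 := by
    have e : fullContr (Kt d) (Isym d)
        = fullContr (Isym d) (Isym d) - fullContr (Jt d) (Isym d) := fullContr_sub _ _ _
    rw [e, II, JI hd0]
  -- contractions of Giso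
  have GisoJ : fullContr Giso (Jt d) = lamJ := by
    have e : fullContr Giso (Jt d)
        = fullContr (fun i j k l => lamJ * Jt d i j k l) (Jt d)
          + fullContr (fun i j k l => (lamK / nK) * Kt d i j k l) (Jt d) := fullContr_add _ _ _
    rw [e, fullContr_smul, fullContr_smul, JJ hd0, KJ]
    ring
  have GisoI : fullContr Giso (Isym d) = lamJ + lamK := by
    have e : fullContr Giso (Isym d)
        = fullContr (fun i j k l => lamJ * Jt d i j k l) (Isym d)
          + fullContr (fun i j k l => (lamK / nK) * Kt d i j k l) (Isym d) := fullContr_add _ _ _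
    rw [e, fullContr_smul, fullContr_smul, JI hd0, KI]
    show lamJ * 1 + lamK / nK * nK = lamJ + lamK
    field_simp
  -- Gperp contractions
  have g2 : fullContr Gperp (Jt d) = 0 := by
    have e : fullContr Gperp (Jt d)
        = fullContr (Green α β ξ) (Jt d) - fullContr Giso (Jt d) := fullContr_sub _ _ _
    rw [e, GJ, GisoJ]
    show (4 * α + β) / (d:ℝ) - (1 / (d : ℝ)) * (4 * α + β) = 0
    ring
  have gI : fullContr Gperp (Isym d) = 0 := by
    have e : fullContr Gperp (Isym d)
        = fullContr (Green α β ξ) (Isym d) - fullContr Giso (Isym d) := fullContr_sub _ _ _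
    rw [e, GI, GisoI]
    show 2 * ((d:ℝ) + 1) * α + β
        - ((1 / (d : ℝ)) * (4 * α + β)
          + (1 / (d : ℝ)) * ((2 * (d : ℝ) * ((d : ℝ) + 1) - 4) * α + ((d : ℝ) - 1) * β)) = 0
    field_simp
    ring
  refine ⟨?_, g2, ?_⟩
  · funext i j k l
    show Green α β ξ i j k l = Giso i j k l + (Green α β ξ i j k l - Giso i j k l)
    ring
  · have e : fullContr Gperp (Kt d)
        = fullContr Gperp (Isym d) - fullContr Gperp (Jt d) := fullContr_sub' _ _ _
    rw [e, g2, gI]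
    ring
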